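/- arXiv:math/0307130 — 2 statements merged into one kernel-verified Lean document; each statement's English description precedes it below -/
import Mathlib

section
/- Let n be a positive integer and let x, y_1, …, y_n be vectors in H. Then (∑_{i=1}^n |(x, y_i)|^2)^2 ≤ ‖x‖^2 · ∑_{i=1}^n |(x, y_i)|^2 (∑_{j=1}^n |(y_i, y_j)|) ≤ ‖x‖^2 · (∑_{i=1}^n |(x, y_i)|^2) · max_{1≤i≤n} (∑_{j=1}^n |(y_i, y_j)|). -/
/-!
Cauchy–Schwarz for `x` and `s = ∑ i, conj ⟪x, yᵢ⟫ • yᵢ` gives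
`(∑ |⟪x, yᵢ⟫|²)² = |⟪x, s⟫|² ≤ ‖x‖² ‖s‖²`. Expanding `‖s‖²` bounds it by
`∑ᵢⱼ |⟪x, yᵢ⟫| |⟪x, yⱼ⟫| |⟪yᵢ, yⱼ⟫|`, and `2 |aᵢ| |aⱼ| ≤ |aᵢ|² + |aⱼ|²` together with the
symmetry of `|⟪yᵢ, yⱼ⟫|` turns this into `∑ᵢ |⟪x, yᵢ⟫|² ∑ⱼ |⟪yᵢ, yⱼ⟫|`. The last inequality
bounds each row sum by the largest one.
-/

open Finset RCLike ComplexConjugate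

section

variable {ι : Type*} [Fintype ι]

theorem sum_sum_mul_mul_le_sum_sq_mul_sum (a : ι → ℝ) {b : ι → ι → ℝ}
    (hb : ∀ i j, 0 ≤ b i j) (hsymm : ∀ i j, b i j = b j i) :
    ∑ i, ∑ j, a i * a j * b i j ≤ ∑ i, a i ^ 2 * ∑ j, b i j := by
  have hswap : ∑ i, ∑ j, a j ^ 2 * b i j = ∑ i, ∑ j, a i ^ 2 * b i j := by
    rw [sum_comm]
    simp only [hsymm]
  have hamgm : 2 * ∑ i, ∑ j, a i * a j * b i j ≤ 2 * ∑ i, ∑ j, a i ^ 2 * b i j :=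
    calc 2 * ∑ i, ∑ j, a i * a j * b i j = ∑ i, ∑ j, 2 * a i * a j * b i j := by
          simp only [mul_sum, mul_assoc]
      _ ≤ ∑ i, ∑ j, (a i ^ 2 + a j ^ 2) * b i j := by
          gcongr with i _ j _
          · exact hb i j
          · exact two_mul_le_add_sq (a i) (a j)
      _ = 2 * ∑ i, ∑ j, a i ^ 2 * b i j := by
          simp only [add_mul, sum_add_distrib, hswap]; ring
  simpa only [mul_sum] using le_of_mul_le_mul_left hamgm two_pos

theorem sum_mul_le_sum_mul_sup' (w : ι → ℝ) (hw : ∀ i, 0 ≤ w i) (f : ι → ℝ)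
    (hne : (univ : Finset ι).Nonempty) :
    ∑ i, w i * f i ≤ (∑ i, w i) * univ.sup' hne f := by
  rw [sum_mul]
  gcongr with i hi
  · exact hw i
  · exact le_sup' f hi

end

section

variable {𝕜 E ι : Type*} [RCLike 𝕜] [NormedAddCommGroup E] [InnerProductSpace 𝕜 E] [Fintype ι]

local notation "⟪" x ", " y "⟫" => inner 𝕜 x y

theorem norm_sum_smul_sq_le (c : ι → 𝕜) (v : ι → E) :
    ‖∑ i, c i • v i‖ ^ 2 ≤ ∑ i, ∑ j, ‖c i‖ * ‖c j‖ * ‖⟪v i, v j⟫‖ :=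
  calc ‖∑ i, c i • v i‖ ^ 2 = ‖⟪∑ i, c i • v i, ∑ j, c j • v j⟫‖ := by
        rw [inner_self_eq_norm_sq_to_K, norm_pow, norm_ofReal, abs_norm]
    _ = ‖∑ i, ∑ j, conj (c i) * c j * ⟪v i, v j⟫‖ := by
        rw [sum_inner]
        simp only [inner_smul_left, inner_sum, inner_smul_right, mul_assoc, mul_left_comm]
    _ ≤ ∑ i, ∑ j, ‖conj (c i) * c j * ⟪v i, v j⟫‖ :=
        (norm_sum_le _ _).trans (sum_le_sum fun i _ => norm_sum_le _ _)
    _ = ∑ i, ∑ j, ‖c i‖ * ‖c j‖ * ‖⟪v i, v j⟫‖ := by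
        simp only [norm_mul, norm_conj]

theorem inner_sum_conj_inner_smul (x : E) (y : ι → E) :
    ⟪x, ∑ i, conj ⟪x, y i⟫ • y i⟫ = ((∑ i, ‖⟪x, y i⟫‖ ^ 2 : ℝ) : 𝕜) := by
  simp only [inner_sum, inner_smul_right, RCLike.conj_mul, ofReal_sum, ofReal_pow]

theorem sq_sum_norm_inner_sq_le (x : E) (y : ι → E) :
    (∑ i, ‖⟪x, y i⟫‖ ^ 2) ^ 2 ≤
      ‖x‖ ^ 2 * ∑ i, ∑ j, ‖⟪x, y i⟫‖ * ‖⟪x, y j⟫‖ * ‖⟪y i, y j⟫‖ := by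
  set s := ∑ i, conj ⟪x, y i⟫ • y i
  have hs : ∑ i, ‖⟪x, y i⟫‖ ^ 2 = ‖⟪x, s⟫‖ := by
    rw [inner_sum_conj_inner_smul, norm_ofReal,
      abs_of_nonneg (sum_nonneg fun i _ => sq_nonneg _)]
  calc (∑ i, ‖⟪x, y i⟫‖ ^ 2) ^ 2 ≤ (‖x‖ * ‖s‖) ^ 2 := by
        rw [hs]; gcongr; exact norm_inner_le_norm x s
    _ = ‖x‖ ^ 2 * ‖s‖ ^ 2 := mul_pow _ _ _
    _ ≤ ‖x‖ ^ 2 * ∑ i, ∑ j, ‖⟪x, y i⟫‖ * ‖⟪x, y j⟫‖ * ‖⟪y i, y j⟫‖ := by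
        gcongr
        simpa only [norm_conj] using norm_sum_smul_sq_le (fun i => conj ⟪x, y i⟫) y

end

theorem stmt_1 {H : Type*} [NormedAddCommGroup H] [InnerProductSpace ℂ H]
    {n : ℕ} (hn : 0 < n) (x : H) (y : Fin n → H) :
    (∑ i, (‖(inner ℂ x (y i) : ℂ)‖) ^ 2) ^ 2 ≤ ‖x‖ ^ 2 * (∑ i, (‖(inner ℂ x (y i) : ℂ)‖) ^ 2 * (∑ j, ‖(inner ℂ (y i) (y j) : ℂ)‖)) ∧ ‖x‖ ^ 2 * (∑ i, (‖(inner ℂ x (y i) : ℂ)‖) ^ 2 * (∑ j, ‖(inner ℂ (y i) (y j) : ℂ)‖)) ≤ ‖x‖ ^ 2 * (∑ i, (‖(inner ℂ x (y i) : ℂ)‖) ^ 2) * (Finset.univ.sup' (Finset.univ_nonempty_iff.mpr (Fin.pos_iff_nonempty.mp hn)) (fun i => (∑ j, ‖(inner ℂ (y i) (y j) : ℂ)‖))) := by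
  refine ⟨(sq_sum_norm_inner_sq_le x y).trans ?_, ?_⟩
  · refine mul_le_mul_of_nonneg_left ?_ (sq_nonneg _)
    exact sum_sum_mul_mul_le_sum_sq_mul_sum _ (fun i j => norm_nonneg _)
      fun i j => norm_inner_symm (y i) (y j)
  · rw [mul_assoc]
    gcongr
    exact sum_mul_le_sum_mul_sup' _ (fun i => sq_nonneg _) _ _
end

section
/- Let n be a positive integer, let z_1, …, z_n be vectors in H, let α_1, …, α_n be complex numbers, let p > 1 and q satisfy 1/p + 1/q = 1, let α > 1 and β satisfy 1/α + 1/β = 1, and let γ > 1 and δ satisfy 1/γ + 1/δ = 1. Then ‖∑_{i=1}^n α_i z_i‖^2 ≤ (∑_{i=1}^n |α_i|^{αp})^{1/(αp)} · (∑_{i=1}^n |α_i|^{γq})^{1/(γq)} · (∑_{i=1}^n (∑_{j=1}^n |(z_i, z_j)|)^{β})^{1/(pβ)} · (∑_{i=1}^n (∑_{j=1}^n |(z_i, z_j)|)^{δ})^{1/(δq)}. -/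
/-!
Expanding `‖∑ aᵢ zᵢ‖² = ∑ᵢⱼ conj aᵢ aⱼ (zᵢ, zⱼ)` bounds the square by
`∑ᵢⱼ |aᵢ| |aⱼ| |(zᵢ, zⱼ)|`. Hölder's inequality with exponents `p, q` and the weights
`|(zᵢ, zⱼ)|`, which are symmetric in `i, j`, bounds this by
`(∑ᵢ |aᵢ|^p Cᵢ)^{1/p} (∑ᵢ |aᵢ|^q Cᵢ)^{1/q}` with `Cᵢ = ∑ⱼ |(zᵢ, zⱼ)|`. A second application of
Hölder to each factor, with exponents `α, β` and `γ, δ`, separates `|aᵢ|` from `Cᵢ`.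
-/

open Finset Real

theorem norm_sum_smul_sq_le_sum_sum_norm_mul_norm_inner {𝕜 E ι : Type*} [RCLike 𝕜]
    [NormedAddCommGroup E] [InnerProductSpace 𝕜 E] (s : Finset ι) (a : ι → 𝕜) (z : ι → E) :
    ‖∑ i ∈ s, a i • z i‖ ^ 2 ≤ ∑ i ∈ s, ∑ j ∈ s, ‖a i‖ * ‖a j‖ * ‖inner 𝕜 (z i) (z j)‖ := by
  calc ‖∑ i ∈ s, a i • z i‖ ^ 2
      = ‖inner 𝕜 (∑ i ∈ s, a i • z i) (∑ j ∈ s, a j • z j)‖ := by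
        rw [inner_self_eq_norm_sq_to_K, norm_pow, RCLike.norm_ofReal, abs_norm]
    _ = ‖∑ i ∈ s, ∑ j ∈ s, starRingEnd 𝕜 (a i) * a j * inner 𝕜 (z i) (z j)‖ := by
        congr 1
        rw [sum_inner]
        refine sum_congr rfl fun i _ => ?_
        rw [inner_smul_left, inner_sum, mul_sum]
        exact sum_congr rfl fun j _ => by rw [inner_smul_right, mul_assoc]
    _ ≤ ∑ i ∈ s, ∑ j ∈ s, ‖starRingEnd 𝕜 (a i) * a j * inner 𝕜 (z i) (z j)‖ :=
        (norm_sum_le _ _).trans (sum_le_sum fun i _ => norm_sum_le _ _)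
    _ = _ := by simp only [norm_mul, RCLike.norm_conj]

namespace Real

variable {ι : Type*} {p q : ℝ}

theorem inner_le_weighted_Lp_mul_Lq_of_nonneg (s : Finset ι) {w f g : ι → ℝ}
    (hpq : p.HolderConjugate q) (hw : ∀ i ∈ s, 0 ≤ w i) (hf : ∀ i ∈ s, 0 ≤ f i)
    (hg : ∀ i ∈ s, 0 ≤ g i) :
    ∑ i ∈ s, w i * f i * g i ≤
      (∑ i ∈ s, w i * f i ^ p) ^ (1 / p) * (∑ i ∈ s, w i * g i ^ q) ^ (1 / q) := by
  have hexp : 1 / p + 1 / q = 1 := by rw [hpq.one_div_add_one_div, div_one]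
  have hsplit : ∀ i ∈ s, w i * f i * g i = (w i ^ (1 / p) * f i) * (w i ^ (1 / q) * g i) :=
    fun i hi => by
      rw [mul_mul_mul_comm, ← rpow_add' (hw i hi) (by rw [hexp]; exact one_ne_zero), hexp,
        rpow_one, mul_assoc]
  have hpow : ∀ {r : ℝ}, r ≠ 0 → ∀ {h : ι → ℝ}, (∀ i ∈ s, 0 ≤ h i) →
      ∀ i ∈ s, (w i ^ (1 / r) * h i) ^ r = w i * h i ^ r := fun hr h hh i hi => by
    rw [mul_rpow (rpow_nonneg (hw i hi) _) (hh i hi), ← rpow_mul (hw i hi), one_div_mul_cancel hr,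
      rpow_one]
  rw [sum_congr rfl hsplit, ← sum_congr rfl (hpow hpq.ne_zero hf),
    ← sum_congr rfl (hpow hpq.symm.ne_zero hg)]
  exact inner_le_Lp_mul_Lq_of_nonneg s hpq
    (fun i hi => mul_nonneg (rpow_nonneg (hw i hi) _) (hf i hi))
    (fun i hi => mul_nonneg (rpow_nonneg (hw i hi) _) (hg i hi))

theorem sum_sum_mul_mul_le_of_symm [Fintype ι] {A : ι → ℝ} {B : ι → ι → ℝ}
    (hpq : p.HolderConjugate q) (hA : ∀ i, 0 ≤ A i) (hB : ∀ i j, 0 ≤ B i j)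
    (hB_symm : ∀ i j, B i j = B j i) :
    ∑ i, ∑ j, A i * A j * B i j ≤
      (∑ i, A i ^ p * ∑ j, B i j) ^ (1 / p) * (∑ i, A i ^ q * ∑ j, B i j) ^ (1 / q) := by
  have hHolder := inner_le_weighted_Lp_mul_Lq_of_nonneg (univ : Finset (ι × ι))
    (w := fun x => B x.1 x.2) (f := fun x => A x.1) (g := fun x => A x.2) hpq
    (fun x _ => hB _ _) (fun x _ => hA _) (fun x _ => hA _)
  simp only [Fintype.sum_prod_type] at hHolder
  have hlhs : ∑ i, ∑ j, A i * A j * B i j = ∑ i, ∑ j, B i j * A i * A j :=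
    sum_congr rfl fun i _ => sum_congr rfl fun j _ => by ring
  have hp_side : ∑ i, A i ^ p * ∑ j, B i j = ∑ i, ∑ j, B i j * A i ^ p :=
    sum_congr rfl fun i _ => by rw [mul_sum]; exact sum_congr rfl fun j _ => mul_comm _ _
  have hq_side : ∑ i, A i ^ q * ∑ j, B i j = ∑ i, ∑ j, B i j * A j ^ q := by
    rw [sum_comm]
    exact sum_congr rfl fun j _ => by
      rw [mul_sum]; exact sum_congr rfl fun i _ => by rw [hB_symm, mul_comm]
  rwa [hlhs, hp_side, hq_side]

theorem rpow_sum_rpow_mul_le (s : Finset ι) {A C : ι → ℝ} {r t : ℝ} (hp : 0 < p)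
    (hrt : r.HolderConjugate t) (hA : ∀ i ∈ s, 0 ≤ A i) (hC : ∀ i ∈ s, 0 ≤ C i) :
    (∑ i ∈ s, A i ^ p * C i) ^ (1 / p) ≤
      (∑ i ∈ s, A i ^ (r * p)) ^ (1 / (r * p)) * (∑ i ∈ s, C i ^ t) ^ (1 / (p * t)) := by
  have hSA : 0 ≤ ∑ i ∈ s, A i ^ (r * p) := sum_nonneg fun i hi => rpow_nonneg (hA i hi) _
  have hSC : 0 ≤ ∑ i ∈ s, C i ^ t := sum_nonneg fun i hi => rpow_nonneg (hC i hi) _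
  have hHolder := inner_le_Lp_mul_Lq_of_nonneg s hrt (fun i hi => rpow_nonneg (hA i hi) p) hC
  rw [sum_congr rfl fun i hi => (rpow_mul (hA i hi) p r).symm, mul_comm p r] at hHolder
  calc (∑ i ∈ s, A i ^ p * C i) ^ (1 / p)
      ≤ ((∑ i ∈ s, A i ^ (r * p)) ^ (1 / r) * (∑ i ∈ s, C i ^ t) ^ (1 / t)) ^ (1 / p) :=
        rpow_le_rpow (sum_nonneg fun i hi => mul_nonneg (rpow_nonneg (hA i hi) p) (hC i hi))
          hHolder (one_div_nonneg.mpr hp.le)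
    _ = _ := by
        rw [mul_rpow (rpow_nonneg hSA _) (rpow_nonneg hSC _), ← rpow_mul hSA, ← rpow_mul hSC,
          one_div_mul_one_div, one_div_mul_one_div, mul_comm t p]

end Real

theorem stmt_8_general {H : Type*} [NormedAddCommGroup H] [InnerProductSpace ℂ H]
    {n : ℕ} (z : Fin n → H) (a : Fin n → ℂ) (p q : ℝ) (hp : 1 < p) (hpq : 1 / p + 1 / q = 1) (r s : ℝ) (hr : 1 < r) (hrs : 1 / r + 1 / s = 1) (g d : ℝ) (hg : 1 < g) (hgd : 1 / g + 1 / d = 1) :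
    ‖∑ i, a i • z i‖ ^ 2 ≤ (∑ i, ‖a i‖ ^ (r * p)) ^ (1 / (r * p)) * (∑ i, ‖a i‖ ^ (g * q)) ^ (1 / (g * q)) * (∑ i, (∑ j, ‖(inner ℂ (z i) (z j) : ℂ)‖) ^ s) ^ (1 / (p * s)) * (∑ i, (∑ j, ‖(inner ℂ (z i) (z j) : ℂ)‖) ^ d) ^ (1 / (d * q)) := by
  have hpq' : p.HolderConjugate q := holderConjugate_iff.mpr ⟨hp, by simpa only [one_div] using hpq⟩
  have hrs' : r.HolderConjugate s := holderConjugate_iff.mpr ⟨hr, by simpa only [one_div] using hrs⟩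
  have hgd' : g.HolderConjugate d := holderConjugate_iff.mpr ⟨hg, by simpa only [one_div] using hgd⟩
  have hA : ∀ i ∈ univ, 0 ≤ ‖a i‖ := fun i _ => norm_nonneg _
  have hC : ∀ i ∈ univ, 0 ≤ ∑ j, ‖(inner ℂ (z i) (z j) : ℂ)‖ := fun i _ => by positivity
  calc ‖∑ i, a i • z i‖ ^ 2
      ≤ ∑ i, ∑ j, ‖a i‖ * ‖a j‖ * ‖(inner ℂ (z i) (z j) : ℂ)‖ :=
        norm_sum_smul_sq_le_sum_sum_norm_mul_norm_inner univ a z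
    _ ≤ (∑ i, ‖a i‖ ^ p * ∑ j, ‖(inner ℂ (z i) (z j) : ℂ)‖) ^ (1 / p) *
          (∑ i, ‖a i‖ ^ q * ∑ j, ‖(inner ℂ (z i) (z j) : ℂ)‖) ^ (1 / q) :=
        sum_sum_mul_mul_le_of_symm hpq' (fun _ => norm_nonneg _) (fun _ _ => norm_nonneg _)
          fun i j => by rw [← inner_conj_symm, RCLike.norm_conj]
    _ ≤ ((∑ i, ‖a i‖ ^ (r * p)) ^ (1 / (r * p)) *
            (∑ i, (∑ j, ‖(inner ℂ (z i) (z j) : ℂ)‖) ^ s) ^ (1 / (p * s))) *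
          ((∑ i, ‖a i‖ ^ (g * q)) ^ (1 / (g * q)) *
            (∑ i, (∑ j, ‖(inner ℂ (z i) (z j) : ℂ)‖) ^ d) ^ (1 / (q * d))) :=
        mul_le_mul (rpow_sum_rpow_mul_le univ hpq'.pos hrs' hA hC)
          (rpow_sum_rpow_mul_le univ hpq'.symm.pos hgd' hA hC) (by positivity) (by positivity)
    _ = _ := by rw [mul_comm q d]; ring

theorem stmt_8 {H : Type*} [NormedAddCommGroup H] [InnerProductSpace ℂ H]
    {n : ℕ} (hn : 0 < n) (z : Fin n → H) (a : Fin n → ℂ) (p q : ℝ) (hp : 1 < p) (hpq : 1 / p + 1 / q = 1) (r s : ℝ) (hr : 1 < r) (hrs : 1 / r + 1 / s = 1) (g d : ℝ) (hg : 1 < g) (hgd : 1 / g + 1 / d = 1) :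
    ‖∑ i, a i • z i‖ ^ 2 ≤ (∑ i, ‖a i‖ ^ (r * p)) ^ (1 / (r * p)) * (∑ i, ‖a i‖ ^ (g * q)) ^ (1 / (g * q)) * (∑ i, (∑ j, ‖(inner ℂ (z i) (z j) : ℂ)‖) ^ s) ^ (1 / (p * s)) * (∑ i, (∑ j, ‖(inner ℂ (z i) (z j) : ℂ)‖) ^ d) ^ (1 / (d * q)) :=
  stmt_8_general z a p q hp hpq r s hr hrs g d hg hgd
end
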